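/- arXiv:2602.20822 — 3 statements merged into one kernel-verified Lean document; each statement's English description precedes it below -/
import Mathlib

section
/- Let κ ≥ 0, t > 0, and γ ∈ ℝ³ with ‖γ‖ ≤ 2√(κ²+t²), and let d₁, d₂ ∈ ℝ³ be orthonormal vectors that are both orthogonal to γ. Set β := √(κ² + t² − ‖γ‖²/4) and define a := −γ/2 + i t d₁ + β d₂ and b := γ/2 − i t d₁ + β d₂ in ℂ³ (componentwise). Then: (i) a − conj(b) = −γ; (ii) ‖Im a‖ = ‖Im b‖ = t; (iii) a·a = b·b = κ² for the bilinear dot product; and (iv) for every x ∈ ℝ³ one has exp(i a·x)·conj(exp(i b·x)) = exp(−i γ·x). -/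
set_option maxHeartbeats 1000000

noncomputable section

open Complex RealInnerProductSpace

theorem cgo_pair_construction (κ t : ℝ) (hκ : 0 ≤ κ) (ht : 0 < t)
    (γ d₁ d₂ : EuclideanSpace ℝ (Fin 3))
    (hγ : ‖γ‖ ≤ 2 * Real.sqrt (κ ^ 2 + t ^ 2))
    (hd₁ : ‖d₁‖ = 1) (hd₂ : ‖d₂‖ = 1) (hd₁d₂ : ⟪d₁, d₂⟫ = 0)
    (hd₁γ : ⟪d₁, γ⟫ = 0) (hd₂γ : ⟪d₂, γ⟫ = 0)
    (β : ℝ) (hβ : β = Real.sqrt (κ ^ 2 + t ^ 2 - ‖γ‖ ^ 2 / 4))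
    (a b : Fin 3 → ℂ)
    (ha : ∀ j, a j = -(γ j : ℂ) / 2 + Complex.I * (t : ℂ) * (d₁ j : ℂ) + (β : ℂ) * (d₂ j : ℂ))
    (hb : ∀ j, b j = (γ j : ℂ) / 2 - Complex.I * (t : ℂ) * (d₁ j : ℂ) + (β : ℂ) * (d₂ j : ℂ)) :
    (∀ j, a j - (starRingEnd ℂ) (b j) = -(γ j : ℂ)) ∧
    Real.sqrt (∑ j, (a j).im ^ 2) = t ∧ Real.sqrt (∑ j, (b j).im ^ 2) = t ∧
    (∑ j, a j ^ 2) = (κ : ℂ) ^ 2 ∧ (∑ j, b j ^ 2) = (κ : ℂ) ^ 2 ∧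
    (∀ x : EuclideanSpace ℝ (Fin 3),
      Complex.exp (Complex.I * ∑ j, a j * (x j : ℂ)) *
        (starRingEnd ℂ) (Complex.exp (Complex.I * ∑ j, b j * (x j : ℂ)))
      = Complex.exp (-Complex.I * ∑ j, (γ j : ℂ) * (x j : ℂ))) := by
  have hs : Real.sqrt (κ^2+t^2) ^ 2 = κ^2+t^2 := Real.sq_sqrt (by positivity)
  have hβnn : 0 ≤ κ^2 + t^2 - ‖γ‖^2/4 := by
    nlinarith [norm_nonneg γ, Real.sqrt_nonneg (κ^2+t^2)]
  have hβ2 : β^2 = κ^2 + t^2 - ‖γ‖^2/4 := by rw [hβ]; exact Real.sq_sqrt hβnn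
  have hγ2 : γ 0^2 + γ 1^2 + γ 2^2 = ‖γ‖^2 := by
    have h := real_inner_self_eq_norm_sq γ
    rw [PiLp.inner_apply] at h
    simp [RCLike.inner_apply, Fin.sum_univ_three] at h
    linear_combination h
  have hd₁2 : d₁ 0^2 + d₁ 1^2 + d₁ 2^2 = 1 := by
    have h := real_inner_self_eq_norm_sq d₁
    rw [hd₁] at h
    rw [PiLp.inner_apply] at h
    simp [RCLike.inner_apply, Fin.sum_univ_three] at h
    linear_combination h
  have hd₂2 : d₂ 0^2 + d₂ 1^2 + d₂ 2^2 = 1 := by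
    have h := real_inner_self_eq_norm_sq d₂
    rw [hd₂] at h
    rw [PiLp.inner_apply] at h
    simp [RCLike.inner_apply, Fin.sum_univ_three] at h
    linear_combination h
  have h12 : d₁ 0 * d₂ 0 + d₁ 1 * d₂ 1 + d₁ 2 * d₂ 2 = 0 := by
    have h := hd₁d₂
    simp [PiLp.inner_apply, RCLike.inner_apply, Fin.sum_univ_three] at h
    linear_combination h
  have h1γ : d₁ 0 * γ 0 + d₁ 1 * γ 1 + d₁ 2 * γ 2 = 0 := by
    have h := hd₁γ
    simp [PiLp.inner_apply, RCLike.inner_apply, Fin.sum_univ_three] at h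
    linear_combination h
  have h2γ : d₂ 0 * γ 0 + d₂ 1 * γ 1 + d₂ 2 * γ 2 = 0 := by
    have h := hd₂γ
    simp [PiLp.inner_apply, RCLike.inner_apply, Fin.sum_univ_three] at h
    linear_combination h
  -- complex casts
  have cγ : ((γ 0:ℂ))^2 + (γ 1:ℂ)^2 + (γ 2:ℂ)^2 = ((‖γ‖^2 : ℝ) : ℂ) := by
    exact_mod_cast congrArg (Complex.ofReal) hγ2
  have c1 : ((d₁ 0:ℂ))^2 + (d₁ 1:ℂ)^2 + (d₁ 2:ℂ)^2 = 1 := by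
    have h := congrArg (Complex.ofReal) hd₁2
    push_cast at h
    linear_combination h
  have c2 : ((d₂ 0:ℂ))^2 + (d₂ 1:ℂ)^2 + (d₂ 2:ℂ)^2 = 1 := by
    have h := congrArg (Complex.ofReal) hd₂2
    push_cast at h
    linear_combination h
  have c12 : (d₁ 0:ℂ) * (d₂ 0:ℂ) + (d₁ 1:ℂ) * (d₂ 1:ℂ) + (d₁ 2:ℂ) * (d₂ 2:ℂ) = 0 := by
    have h := congrArg (Complex.ofReal) h12
    push_cast at h
    linear_combination h
  have c1γ : (d₁ 0:ℂ) * (γ 0:ℂ) + (d₁ 1:ℂ) * (γ 1:ℂ) + (d₁ 2:ℂ) * (γ 2:ℂ) = 0 := by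
    have h := congrArg (Complex.ofReal) h1γ
    push_cast at h
    linear_combination h
  have c2γ : (d₂ 0:ℂ) * (γ 0:ℂ) + (d₂ 1:ℂ) * (γ 1:ℂ) + (d₂ 2:ℂ) * (γ 2:ℂ) = 0 := by
    have h := congrArg (Complex.ofReal) h2γ
    push_cast at h
    linear_combination h
  have cβ : ((β:ℂ))^2 = (κ:ℂ)^2 + (t:ℂ)^2 - ((‖γ‖^2 : ℝ):ℂ)/4 := by
    have h := congrArg (Complex.ofReal) hβ2
    push_cast at h ⊢
    linear_combination h
  have hconj : ∀ j, (starRingEnd ℂ) (b j) = (γ j : ℂ) / 2 + Complex.I * (t : ℂ) * (d₁ j : ℂ) + (β : ℂ) * (d₂ j : ℂ) := by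
    intro j
    rw [hb]
    push_cast [map_add, map_sub, map_mul, map_div₀, map_ofNat, Complex.conj_I, Complex.conj_ofReal]
    ring
  have part1 : ∀ j, a j - (starRingEnd ℂ) (b j) = -(γ j : ℂ) := by
    intro j; rw [ha, hconj]; ring
  have hima : ∀ j, (a j).im = t * d₁ j := by
    intro j; simp [ha]
  have himb : ∀ j, (b j).im = -(t * d₁ j) := by
    intro j; rw [hb]; simp
  have part2a : Real.sqrt (∑ j, (a j).im ^ 2) = t := by
    have : (∑ j, (a j).im ^ 2) = t^2 := by
      simp only [Fin.sum_univ_three, hima]; nlinarith [hd₁2]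
    rw [this]; exact Real.sqrt_sq ht.le
  have part2b : Real.sqrt (∑ j, (b j).im ^ 2) = t := by
    have : (∑ j, (b j).im ^ 2) = t^2 := by
      simp only [Fin.sum_univ_three, himb]; nlinarith [hd₁2]
    rw [this]; exact Real.sqrt_sq ht.le
  have part3a : (∑ j, a j ^ 2) = (κ : ℂ) ^ 2 := by
    simp only [Fin.sum_univ_three, ha]
    linear_combination (1/4 : ℂ) * cγ + (Complex.I^2 * (t:ℂ)^2) * c1 + (β:ℂ)^2 * c2
      - Complex.I * (t:ℂ) * c1γ - (β:ℂ) * c2γ + 2 * Complex.I * (t:ℂ) * (β:ℂ) * c12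
      + cβ + ((t:ℂ)^2 + (t:ℂ)^2 * Complex.I^2 - Complex.I^2 * (t:ℂ)^2) * Complex.I_sq
  have part3b : (∑ j, b j ^ 2) = (κ : ℂ) ^ 2 := by
    simp only [Fin.sum_univ_three, hb]
    linear_combination (1/4 : ℂ) * cγ + (Complex.I^2 * (t:ℂ)^2) * c1 + (β:ℂ)^2 * c2
      - Complex.I * (t:ℂ) * c1γ + (β:ℂ) * c2γ - 2 * Complex.I * (t:ℂ) * (β:ℂ) * c12
      + cβ + ((t:ℂ)^2 + (t:ℂ)^2 * Complex.I^2 - Complex.I^2 * (t:ℂ)^2) * Complex.I_sq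
  refine ⟨part1, part2a, part2b, part3a, part3b, ?_⟩
  intro x
  rw [← Complex.exp_conj, ← Complex.exp_add]
  congr 1
  simp only [map_mul, map_sum, Complex.conj_I, Complex.conj_ofReal, map_neg]
  simp only [Fin.sum_univ_three]
  rw [ha 0, ha 1, ha 2, hconj 0, hconj 1, hconj 2]
  ring
end
end

section
/- Let q₁, q₂ : ℝ³ → ℝ be bounded measurable functions vanishing outside D, let γ ∈ ℝ³, and let a, b ∈ ℂ³ satisfy a − conj(b) = −γ. Suppose φ_a, φ_b ∈ L²(μ) satisfy ∫ conj(G_κ(x,y)) φ_a(y) dμ(y) = exp(i a·x) and ∫ conj(G_κ(x,y)) φ_b(y) dμ(y) = exp(i b·x) for all x ∈ D. Then (2π)^{3/2} |q̂₁(γ) − q̂₂(γ)| ≤ ‖φ_a‖_{L²(μ)} · ‖φ_b‖_{L²(μ)} · ‖c_{q₁} − c_{q₂}‖_{L²(μ⊗μ)}. -/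
noncomputable section

set_option maxHeartbeats 1000000

open MeasureTheory Complex RealInnerProductSpace ENNReal

/-- ℝ³ as a Euclidean space. -/
abbrev E3 := EuclideanSpace ℝ (Fin 3)

/-- The fundamental solution of the Helmholtz equation,
`G_κ(x,z) = exp(iκ‖x−z‖)/(4π‖x−z‖)`. -/
def Gker (κ : ℝ) (x z : E3) : ℂ :=
  Complex.exp (Complex.I * (κ : ℂ) * (‖x - z‖ : ℝ)) / (4 * Real.pi * ‖x - z‖ : ℝ)

/-- The covariance kernel `c_q(x,y) = ∫_D G_κ(x,z) q(z) conj(G_κ(y,z)) dz`. -/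
def covKer (κ : ℝ) (D : Set E3) (q : E3 → ℝ) (x y : E3) : ℂ :=
  ∫ z in D, Gker κ x z * (q z : ℂ) * (starRingEnd ℂ) (Gker κ y z)

/-- The `L²(μ⊗μ)` distance of two covariance kernels, i.e. the Hilbert–Schmidt norm of the
difference of the induced integral operators. -/
def covDist (κ : ℝ) (D : Set E3) (μ : Measure E3) (q₁ q₂ : E3 → ℝ) : ℝ :=
  Real.sqrt (∫ x, ∫ y, ‖covKer κ D q₁ x y - covKer κ D q₂ x y‖ ^ 2 ∂μ ∂μ)

/-- The Fourier transform `q̂(γ) = (2π)^{-3/2} ∫ q(x) exp(-iγ·x) dx`. -/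
def ft (q : E3 → ℝ) (γ : E3) : ℂ :=
  (((2 * Real.pi) ^ (-(3 : ℝ) / 2) : ℝ) : ℂ) *
    ∫ x : E3, (q x : ℂ) * Complex.exp (-Complex.I * (⟪γ, x⟫ : ℝ))

/-- The squared Sobolev norm `‖q‖_{H^s}² = ∫ (1+‖γ‖²)^s |q̂(γ)|² dγ`, valued in `[0,∞]`. -/
def sobNormSq (s : ℝ) (q : E3 → ℝ) : ℝ≥0∞ :=
  ∫⁻ γ : E3, ENNReal.ofReal ((1 + ‖γ‖ ^ 2) ^ s * ‖ft q γ‖ ^ 2)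

/-- A bounded measurable source strength vanishing outside `D`. -/
def IsSource (D : Set E3) (q : E3 → ℝ) : Prop :=
  Measurable q ∧ (∃ M : ℝ, ∀ x, |q x| ≤ M) ∧ ∀ x ∉ D, q x = 0

/-- CGO representability hypothesis: every complex geometrical optics solution
`exp(iξ·x)` with `ξ·ξ = κ²` is, on `D`, of the form `𝒢*φ_ξ` with a quantitative
`L²(μ)` bound on `φ_ξ`. -/
def CGOHyp (κ R : ℝ) (D : Set E3) (μ : Measure E3) (C₀ : ℝ) : Prop :=
  ∀ ξ : Fin 3 → ℂ, (∑ j, ξ j ^ 2) = (κ : ℂ) ^ 2 →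
    0 < Real.sqrt (∑ j, (ξ j).im ^ 2) →
    ∃ φ : E3 → ℂ, MemLp φ 2 μ ∧
      (∀ x ∈ D, (∫ y, (starRingEnd ℂ) (Gker κ x y) * φ y ∂μ) =
        Complex.exp (Complex.I * ∑ j, ξ j * ((x j : ℝ) : ℂ))) ∧
      eLpNorm φ 2 μ ≤ ENNReal.ofReal
        (C₀ * Real.sqrt (1 + (∑ j, (ξ j).im ^ 2) + κ ^ 2) *
          Real.exp (R * Real.sqrt (∑ j, (ξ j).im ^ 2)))

lemma Gker_symm (κ : ℝ) (x z : E3) : Gker κ x z = Gker κ z x := by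
  unfold Gker; rw [norm_sub_rev]

lemma norm_Gker_le {κ ε : ℝ} (hε : 0 < ε) {x z : E3} (h : ε ≤ ‖x - z‖) :
    ‖Gker κ x z‖ ≤ 1 / (4 * Real.pi * ε) := by
  have hπ : 0 < Real.pi := Real.pi_pos
  have ht : 0 < ‖x - z‖ := hε.trans_le h
  have h1 : ‖Complex.exp (Complex.I * κ * (‖x - z‖ : ℝ))‖ = 1 := by
    have h0 : (Complex.I * κ * (‖x - z‖ : ℝ)).re = 0 := by simp
    rw [Complex.norm_exp, h0, Real.exp_zero]
  rw [Gker, norm_div, h1]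
  have h2 : ‖((4 * Real.pi * ‖x - z‖ : ℝ) : ℂ)‖ = 4 * Real.pi * ‖x - z‖ := by
    rw [Complex.norm_real, Real.norm_eq_abs, abs_of_pos (by positivity)]
  rw [h2]
  have h3 : 0 < 4 * Real.pi * ε := by positivity
  apply one_div_le_one_div_of_le h3
  nlinarith

attribute [fun_prop] Complex.measurable_ofReal

@[fun_prop] lemma measurable_cexp : Measurable Complex.exp := Complex.continuous_exp.measurable

@[fun_prop] lemma measurable_conj' : Measurable fun z : ℂ => (starRingEnd ℂ) z :=
  continuous_star.measurable

lemma measurable_Gker (κ : ℝ) : Measurable (fun p : E3 × E3 => Gker κ p.1 p.2) := by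
  unfold Gker; fun_prop

lemma coord_le_norm (z : E3) (j : Fin 3) : |z j| ≤ ‖z‖ := by
  rw [EuclideanSpace.norm_eq]
  have h1 : |z j| ^ 2 ≤ ∑ i, ‖z i‖ ^ 2 := by
    have := Finset.single_le_sum (f := fun i => ‖z i‖ ^ 2)
      (fun i _ => by positivity) (Finset.mem_univ j)
    simpa [Real.norm_eq_abs, sq_abs] using this
  have := Real.sqrt_le_sqrt h1
  simpa [Real.sqrt_sq_eq_abs, abs_abs] using this

theorem fourier_coefficient_bound_of_representations
    (κ r Rt R : ℝ) (hκ : 0 < κ) (hr : 0 < r) (hrR : r < Rt) (hRR : Rt ≤ R)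
    (D : Set E3) (hDmeas : MeasurableSet D) (hDr : D ⊆ Metric.closedBall 0 r)
    (μ : Measure E3) [IsFiniteMeasure μ] (hμ0 : μ ≠ 0)
    (hμsupp : μ {x : E3 | ‖x‖ < Rt ∨ R < ‖x‖} = 0)
    (q₁ q₂ : E3 → ℝ) (hq₁ : IsSource D q₁) (hq₂ : IsSource D q₂)
    (γ : E3) (a b : Fin 3 → ℂ)
    (hab : ∀ j, a j - (starRingEnd ℂ) (b j) = -(γ j : ℂ))
    (φa φb : E3 → ℂ) (hφa : MemLp φa 2 μ) (hφb : MemLp φb 2 μ)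
    (hrepa : ∀ x ∈ D, (∫ y, (starRingEnd ℂ) (Gker κ x y) * φa y ∂μ) =
      Complex.exp (Complex.I * ∑ j, a j * ((x j : ℝ) : ℂ)))
    (hrepb : ∀ x ∈ D, (∫ y, (starRingEnd ℂ) (Gker κ x y) * φb y ∂μ) =
      Complex.exp (Complex.I * ∑ j, b j * ((x j : ℝ) : ℂ))) :
    (2 * Real.pi) ^ ((3 : ℝ) / 2) * ‖ft q₁ γ - ft q₂ γ‖ ≤
      (eLpNorm φa 2 μ).toReal * (eLpNorm φb 2 μ).toReal * covDist κ D μ q₁ q₂ := by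
  classical
  obtain ⟨hm1, ⟨M₁, hM₁⟩, hz1⟩ := hq₁
  obtain ⟨hm2, ⟨M₂, hM₂⟩, hz2⟩ := hq₂
  set ν : Measure E3 := volume.restrict D with hν
  have hDfin : volume D < ⊤ :=
    lt_of_le_of_lt (measure_mono hDr) (measure_closedBall_lt_top)
  haveI : IsFiniteMeasure ν := ⟨by rwa [hν, Measure.restrict_apply_univ]⟩
  set q : E3 → ℝ := fun z => q₁ z - q₂ z with hqdef
  have hmq : Measurable q := hm1.sub hm2
  set M : ℝ := |M₁| + |M₂| with hMdef
  have hMb : ∀ z, |q z| ≤ M := fun z => (abs_sub (q₁ z) (q₂ z)).trans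
    (add_le_add ((hM₁ z).trans (le_abs_self _)) ((hM₂ z).trans (le_abs_self _)))
  have hM0 : 0 ≤ M := (abs_nonneg _).trans (hMb 0)
  have hqz : ∀ z ∉ D, q z = 0 := fun z hz => by simp [hqdef, hz1 z hz, hz2 z hz]
  have hε : 0 < Rt - r := by linarith
  set C : ℝ := 1 / (4 * Real.pi * (Rt - r)) with hC
  have hC0 : 0 ≤ C := by positivity
  have hzr : ∀ z ∈ D, ‖z‖ ≤ r := fun z hz => by
    simpa [Metric.mem_closedBall, dist_zero_right] using hDr hz
  have hG : ∀ (x z : E3), Rt ≤ ‖x‖ → z ∈ D → ‖Gker κ x z‖ ≤ C := by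
    intro x z hx hz
    refine norm_Gker_le hε ?_
    have h1 := norm_sub_norm_le x z
    have h2 := hzr z hz
    linarith
  have hae : ∀ᵐ x ∂μ, Rt ≤ ‖x‖ := by
    rw [ae_iff]
    refine measure_mono_null (fun x hx => ?_) hμsupp
    simp only [Set.mem_setOf_eq, not_le] at hx ⊢
    exact Or.inl hx
  have haeD : ∀ᵐ z ∂ν, z ∈ D := ae_restrict_mem hDmeas
  -- measurability
  have hGm : Measurable fun p : E3 × E3 => Gker κ p.1 p.2 := measurable_Gker κ
  have hFm : ∀ f : E3 → ℝ, Measurable f → Measurable (fun p : (E3 × E3) × E3 =>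
      Gker κ p.1.1 p.2 * (f p.2 : ℂ) * (starRingEnd ℂ) (Gker κ p.1.2 p.2)) := by
    intro f hf
    unfold Gker; fun_prop
  -- integrability of covKer integrand
  have hIcov : ∀ (f : E3 → ℝ) (Mf : ℝ), Measurable f → (∀ z, |f z| ≤ Mf) →
      ∀ x y : E3, Rt ≤ ‖x‖ → Rt ≤ ‖y‖ →
      Integrable (fun z => Gker κ x z * (f z : ℂ) * (starRingEnd ℂ) (Gker κ y z)) ν := by
    intro f Mf hf hMf x y hx hy
    have hMf0 : 0 ≤ Mf := (abs_nonneg _).trans (hMf 0)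
    refine Integrable.mono' (integrable_const (C * Mf * C)) ?_ ?_
    · exact ((hFm f hf).comp
        ((measurable_const.prodMk measurable_id) : Measurable fun z : E3 => ((x, y), z))
        ).aestronglyMeasurable
    · filter_upwards [haeD] with z hz
      have he : ‖Gker κ x z * (f z : ℂ) * (starRingEnd ℂ) (Gker κ y z)‖
          = ‖Gker κ x z‖ * |f z| * ‖Gker κ y z‖ := by
        rw [norm_mul, norm_mul, RCLike.norm_conj, Complex.norm_real, Real.norm_eq_abs]
      rw [he]
      exact mul_le_mul (mul_le_mul (hG x z hx hz) (hMf z) (abs_nonneg _) hC0)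
        (hG y z hy hz) (norm_nonneg _) (by positivity)
  have hcovq : ∀ x y : E3, Rt ≤ ‖x‖ → Rt ≤ ‖y‖ →
      covKer κ D q₁ x y - covKer κ D q₂ x y = covKer κ D q x y := by
    intro x y hx hy
    rw [covKer, covKer, covKer,
      ← integral_sub (hIcov q₁ M₁ hm1 hM₁ x y hx hy) (hIcov q₂ M₂ hm2 hM₂ x y hx hy)]
    refine integral_congr_ae (Filter.Eventually.of_forall fun z => ?_)
    simp only [hqdef]
    push_cast
    ring
  set K : ℝ := (volume D).toReal * (C * M * C) with hK
  have hK0 : 0 ≤ K := by positivity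
  have hcovbd : ∀ x y : E3, Rt ≤ ‖x‖ → Rt ≤ ‖y‖ → ‖covKer κ D q x y‖ ≤ K := by
    intro x y hx hy
    rw [covKer]
    have h1 : ‖∫ z in D, Gker κ x z * (q z : ℂ) * (starRingEnd ℂ) (Gker κ y z)‖
        ≤ ∫ _ in D, C * M * C := by
      refine norm_integral_le_of_norm_le (integrable_const _) ?_
      filter_upwards [haeD] with z hz
      have he : ‖Gker κ x z * (q z : ℂ) * (starRingEnd ℂ) (Gker κ y z)‖
          = ‖Gker κ x z‖ * |q z| * ‖Gker κ y z‖ := by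
        rw [norm_mul, norm_mul, RCLike.norm_conj, Complex.norm_real, Real.norm_eq_abs]
      rw [he]
      exact mul_le_mul (mul_le_mul (hG x z hx hz) (hMb z) (abs_nonneg _) hC0)
        (hG y z hy hz) (norm_nonneg _) (by positivity)
    calc ‖_‖ ≤ ∫ _ in D, C * M * C := h1
      _ = K := by rw [setIntegral_const, smul_eq_mul, measureReal_def]
  -- CGO exponentials
  set eb : E3 → ℂ := fun z => Complex.exp (Complex.I * ∑ j, b j * ((z j : ℝ) : ℂ)) with hebdef
  set Eb : ℝ := Real.exp (∑ j, |(b j).im| * r) with hEbdef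
  have hEb0 : 0 ≤ Eb := (Real.exp_pos _).le
  have hebbd : ∀ z ∈ D, ‖eb z‖ ≤ Eb := by
    intro z hz
    have hre : (Complex.I * ∑ j, b j * ((z j : ℝ) : ℂ)).re = -∑ j, (b j).im * z j := by
      simp [Complex.mul_re, Complex.mul_im]
    rw [hebdef]
    simp only []
    rw [Complex.norm_exp, hre, hEbdef]
    apply Real.exp_le_exp.mpr
    calc -∑ j, (b j).im * z j ≤ |∑ j, (b j).im * z j| := neg_le_abs _
      _ ≤ ∑ j, |(b j).im * z j| := Finset.abs_sum_le_sum_abs _ _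
      _ ≤ ∑ j, |(b j).im| * r := by
          refine Finset.sum_le_sum fun j _ => ?_
          rw [abs_mul]
          exact mul_le_mul_of_nonneg_left ((coord_le_norm z j).trans (hzr z hz)) (abs_nonneg _)
  have hebm : Measurable eb := by rw [hebdef]; fun_prop
  have hφbI : Integrable φb μ := hφb.integrable one_le_two
  have hφaI : Integrable φa μ := hφa.integrable one_le_two
  have haeprod : ∀ᵐ p ∂(μ.prod ν), Rt ≤ ‖p.1‖ ∧ p.2 ∈ D :=
    (Measure.quasiMeasurePreserving_fst.tendsto_ae.eventually hae).and
      (Measure.quasiMeasurePreserving_snd.tendsto_ae.eventually haeD)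
  set ψ : E3 → ℂ := fun x => ∫ y, covKer κ D q x y * φb y ∂μ with hψdef
  have hψeq : ∀ x : E3, Rt ≤ ‖x‖ → ψ x = ∫ z in D, Gker κ x z * (q z : ℂ) * eb z := by
    intro x hx
    have hint : Integrable (Function.uncurry fun (y z : E3) =>
        (Gker κ x z * (q z : ℂ) * (starRingEnd ℂ) (Gker κ y z)) * φb y) (μ.prod ν) := by
      have hdom : Integrable (fun p : E3 × E3 =>
          (C * M * C * ‖φb p.1‖) * (fun _ : E3 => (1:ℝ)) p.2) (μ.prod ν) :=
        (hφbI.norm.const_mul (C * M * C)).mul_prod (integrable_const 1)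
      refine Integrable.mono' (by simpa using hdom) ?_ ?_
      · apply AEStronglyMeasurable.mul
        · exact ((hFm q hmq).comp
            (show Measurable (fun p : E3 × E3 => ((x, p.1), p.2)) by fun_prop)
            ).aestronglyMeasurable
        · exact hφb.aestronglyMeasurable.comp_fst
      · filter_upwards [haeprod] with p hp
        simp only [Function.uncurry]
        calc ‖(Gker κ x p.2 * (q p.2 : ℂ) * (starRingEnd ℂ) (Gker κ p.1 p.2)) * φb p.1‖
            = (‖Gker κ x p.2‖ * |q p.2| * ‖Gker κ p.1 p.2‖) * ‖φb p.1‖ := by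
              rw [norm_mul, norm_mul, norm_mul, RCLike.norm_conj, Complex.norm_real,
                Real.norm_eq_abs]
          _ ≤ (C * M * C) * ‖φb p.1‖ := by
              refine mul_le_mul_of_nonneg_right ?_ (norm_nonneg _)
              exact mul_le_mul (mul_le_mul (hG x p.2 hx hp.2) (hMb p.2) (abs_nonneg _) hC0)
                (hG p.1 p.2 hp.1 hp.2) (norm_nonneg _) (by positivity)
    calc ψ x = ∫ y, (∫ z in D,
            (Gker κ x z * (q z : ℂ) * (starRingEnd ℂ) (Gker κ y z)) * φb y) ∂μ := by
          simp only [hψdef]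
          refine integral_congr_ae (Filter.Eventually.of_forall fun y => ?_)
          beta_reduce
          rw [show covKer κ D q x y = ∫ z in D, Gker κ x z * (q z : ℂ) * (starRingEnd ℂ) (Gker κ y z) from rfl, ← integral_mul_const]
      _ = ∫ z in D, (∫ y,
            (Gker κ x z * (q z : ℂ) * (starRingEnd ℂ) (Gker κ y z)) * φb y ∂μ) :=
          integral_integral_swap hint
      _ = ∫ z in D, Gker κ x z * (q z : ℂ) * eb z := by
          refine setIntegral_congr_fun hDmeas fun z hz => ?_
          have h1 : ∀ y : E3, (Gker κ x z * (q z : ℂ) * (starRingEnd ℂ) (Gker κ y z)) * φb y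
              = (Gker κ x z * (q z : ℂ)) * ((starRingEnd ℂ) (Gker κ z y) * φb y) := by
            intro y; rw [Gker_symm κ z y]; ring
          simp_rw [h1]
          rw [integral_const_mul, hrepb z hz, hebdef, mul_assoc]
  set e2 : E3 → ℂ := fun z => Complex.exp (Complex.I * ((⟪γ, z⟫ : ℝ) : ℂ)) with he2def
  have hab' : ∀ j, b j - (starRingEnd ℂ) (a j) = ((γ j : ℝ) : ℂ) := by
    intro j
    have h := congrArg (starRingEnd ℂ) (hab j)
    simp only [map_sub, map_neg, RCLike.conj_conj, Complex.conj_ofReal] at h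
    linear_combination -h
  have hTid : (∫ x, (starRingEnd ℂ) (φa x) * ψ x ∂μ) = ∫ z in D, (q z : ℂ) * e2 z := by
    have hint2 : Integrable (Function.uncurry fun (x z : E3) =>
        (starRingEnd ℂ) (φa x) * (Gker κ x z * (q z : ℂ) * eb z)) (μ.prod ν) := by
      have hdom : Integrable (fun p : E3 × E3 =>
          (‖φa p.1‖) * (fun _ : E3 => C * M * Eb) p.2) (μ.prod ν) :=
        hφaI.norm.mul_prod (integrable_const _)
      refine Integrable.mono' (by simpa using hdom) ?_ ?_
      · apply AEStronglyMeasurable.mul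
        · exact (continuous_star.comp_aestronglyMeasurable hφa.aestronglyMeasurable).comp_fst
        · refine Measurable.aestronglyMeasurable ?_
          refine (hGm.mul ?_).mul (hebm.comp measurable_snd)
          exact Complex.measurable_ofReal.comp (hmq.comp measurable_snd)
      · filter_upwards [haeprod] with p hp
        simp only [Function.uncurry]
        calc ‖(starRingEnd ℂ) (φa p.1) * (Gker κ p.1 p.2 * (q p.2 : ℂ) * eb p.2)‖
            = ‖φa p.1‖ * (‖Gker κ p.1 p.2‖ * |q p.2| * ‖eb p.2‖) := by
              rw [norm_mul, norm_mul, norm_mul, RCLike.norm_conj, Complex.norm_real,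
                Real.norm_eq_abs]
          _ ≤ ‖φa p.1‖ * (C * M * Eb) := by
              refine mul_le_mul_of_nonneg_left ?_ (norm_nonneg _)
              exact mul_le_mul (mul_le_mul (hG p.1 p.2 hp.1 hp.2) (hMb p.2) (abs_nonneg _) hC0)
                (hebbd p.2 hp.2) (norm_nonneg _) (by positivity)
    calc (∫ x, (starRingEnd ℂ) (φa x) * ψ x ∂μ)
        = ∫ x, (∫ z in D, (starRingEnd ℂ) (φa x) * (Gker κ x z * (q z : ℂ) * eb z)) ∂μ := by
          refine integral_congr_ae ?_
          filter_upwards [hae] with x hx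
          rw [hψeq x hx, ← integral_const_mul]
      _ = ∫ z in D, (∫ x, (starRingEnd ℂ) (φa x) * (Gker κ x z * (q z : ℂ) * eb z) ∂μ) :=
          integral_integral_swap hint2
      _ = ∫ z in D, (q z : ℂ) * e2 z := by
          refine setIntegral_congr_fun hDmeas fun z hz => ?_
          beta_reduce
          have h1 : ∀ x : E3, (starRingEnd ℂ) (φa x) * (Gker κ x z * (q z : ℂ) * eb z)
              = ((q z : ℂ) * eb z) * ((starRingEnd ℂ) (φa x) * Gker κ x z) := by
            intro x; ring
          simp_rw [h1]
          rw [integral_const_mul]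
          have h2 : (∫ x, (starRingEnd ℂ) (φa x) * Gker κ x z ∂μ)
              = (starRingEnd ℂ) (∫ x, (starRingEnd ℂ) (Gker κ z x) * φa x ∂μ) := by
            rw [← integral_conj]
            refine integral_congr_ae (Filter.Eventually.of_forall fun w => ?_)
            beta_reduce
            rw [map_mul, RCLike.conj_conj, Gker_symm κ z w, mul_comm]
          rw [h2, hrepa z hz, ← Complex.exp_conj, hebdef, he2def]
          beta_reduce
          rw [mul_assoc, ← Complex.exp_add]
          have hsum : Complex.I * ∑ j, b j * ((z j : ℝ) : ℂ)
              + (starRingEnd ℂ) (Complex.I * ∑ j, a j * ((z j : ℝ) : ℂ))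
              = Complex.I * ((⟪γ, z⟫ : ℝ) : ℂ) := by
            have hinner : (⟪γ, z⟫ : ℝ) = ∑ j, γ j * z j := by
              simp [PiLp.inner_apply, RCLike.inner_apply, conj_trivial, mul_comm]
            rw [map_mul, Complex.conj_I, map_sum, hinner]
            simp_rw [map_mul, Complex.conj_ofReal]
            push_cast
            rw [Finset.mul_sum, Finset.mul_sum, Finset.mul_sum, ← Finset.sum_add_distrib]
            refine Finset.sum_congr rfl fun j _ => ?_
            have h3 := hab' j
            push_cast at h3
            linear_combination ((z j : ℂ) * Complex.I) * h3
          rw [hsum]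
  set em : E3 → ℂ := fun z => Complex.exp (-Complex.I * ((⟪γ, z⟫ : ℝ) : ℂ)) with hemdef
  have hemn : ∀ z, ‖em z‖ = 1 := by
    intro z
    rw [hemdef]
    beta_reduce
    rw [Complex.norm_exp]
    have h0 : (-Complex.I * ((⟪γ, z⟫ : ℝ) : ℂ)).re = 0 := by simp
    rw [h0, Real.exp_zero]
  have hinnerc : Continuous fun z : E3 => (⟪γ, z⟫ : ℝ) := continuous_const.inner continuous_id
  have hemm : Measurable em := by
    rw [hemdef]
    exact (Complex.continuous_exp.comp
      (continuous_const.mul (Complex.continuous_ofReal.comp hinnerc))).measurable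
  have hIqe : ∀ (f : E3 → ℝ) (Mf : ℝ), Measurable f → (∀ z, |f z| ≤ Mf) → (∀ z ∉ D, f z = 0) →
      Integrable (fun z => (f z : ℂ) * em z) (volume : Measure E3) := by
    intro f Mf hf hMf hf0
    have heq : (fun z => (f z : ℂ) * em z) = D.indicator (fun z => (f z : ℂ) * em z) := by
      ext z
      by_cases hz : z ∈ D
      · rw [Set.indicator_of_mem hz]
      · rw [Set.indicator_of_notMem hz, hf0 z hz]; simp
    rw [heq]
    refine IntegrableOn.integrable_indicator ?_ hDmeas
    refine Integrable.mono' (integrable_const Mf) ?_ ?_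
    · exact ((Complex.measurable_ofReal.comp hf).mul hemm).aestronglyMeasurable
    · refine Filter.Eventually.of_forall fun z => ?_
      rw [norm_mul, hemn z, mul_one, Complex.norm_real, Real.norm_eq_abs]
      exact hMf z
  have hqe1 := hIqe q₁ M₁ hm1 hM₁ hz1
  have hqe2 := hIqe q₂ M₂ hm2 hM₂ hz2
  have hft : (2 * Real.pi) ^ ((3:ℝ)/2) * ‖ft q₁ γ - ft q₂ γ‖
      = ‖∫ z in D, (q z : ℂ) * e2 z‖ := by
    have hdiff : ft q₁ γ - ft q₂ γ
        = (((2 * Real.pi) ^ (-(3:ℝ)/2) : ℝ) : ℂ) * ∫ z in D, (q z : ℂ) * em z := by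
      rw [ft, ft, ← mul_sub, ← integral_sub hqe1 hqe2]
      congr 1
      rw [setIntegral_eq_integral_of_forall_compl_eq_zero
        (fun z hz => by rw [hqz z hz]; simp)]
      refine integral_congr_ae (Filter.Eventually.of_forall fun z => ?_)
      beta_reduce
      rw [hemdef, hqdef]
      beta_reduce
      push_cast
      ring
    have h2π : (0:ℝ) < 2 * Real.pi := by positivity
    have hconj : (∫ z in D, (q z : ℂ) * e2 z)
        = (starRingEnd ℂ) (∫ z in D, (q z : ℂ) * em z) := by
      rw [← integral_conj]
      refine integral_congr_ae (Filter.Eventually.of_forall fun z => ?_)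
      beta_reduce
      rw [map_mul, Complex.conj_ofReal]
      congr 1
      rw [hemdef, he2def]
      beta_reduce
      rw [← Complex.exp_conj]
      congr 1
      simp
    rw [hdiff, hconj, RCLike.norm_conj, norm_mul, Complex.norm_real, Real.norm_eq_abs,
      abs_of_pos (Real.rpow_pos_of_pos h2π _), ← mul_assoc, ← Real.rpow_add h2π]
    norm_num
  -- L² basics
  have hLp : ∀ (φ : E3 → ℂ), MemLp φ 2 μ →
      (eLpNorm φ 2 μ).toReal = (∫ x, ‖φ x‖ ^ 2 ∂μ) ^ ((1:ℝ)/2) := by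
    intro φ hφ'
    have h2 : (2 : ℝ≥0∞).toReal = 2 := by norm_num
    rw [hφ'.eLpNorm_eq_integral_rpow_norm (by norm_num) (by norm_num), h2]
    have hnn : 0 ≤ ∫ x, ‖φ x‖ ^ (2:ℝ) ∂μ :=
      integral_nonneg fun x => Real.rpow_nonneg (norm_nonneg _) _
    rw [ENNReal.toReal_ofReal (Real.rpow_nonneg hnn _)]
    rw [show (2:ℝ)⁻¹ = (1:ℝ)/2 by norm_num]
    congr 1
    refine integral_congr_ae (Filter.Eventually.of_forall fun x => ?_)
    beta_reduce
    rw [show (2:ℝ) = ((2:ℕ):ℝ) by norm_num, Real.rpow_natCast]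
  have hpq22 : Real.HolderConjugate 2 2 := Real.holderConjugate_iff.mpr ⟨one_lt_two, by norm_num⟩
  have hof2 : ENNReal.ofReal (2:ℝ) = 2 := by norm_num
  -- strong measurability of covKer
  have hcovSM : StronglyMeasurable (fun p : E3 × E3 => covKer κ D q p.1 p.2) := by
    have h := (hFm q hmq).stronglyMeasurable.integral_prod_right' (ν := ν)
    exact h
  set Bsq : ℝ := ∫ y, ‖φb y‖ ^ 2 ∂μ with hBsqdef
  have hBsq0 : 0 ≤ Bsq := integral_nonneg fun y => by positivity
  set u : E3 → ℝ := fun x => ∫ y, ‖covKer κ D q x y‖ ^ 2 ∂μ with hudef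
  have hu0 : ∀ x, 0 ≤ u x := fun x => integral_nonneg fun y => by positivity
  have husq : StronglyMeasurable (fun p : E3 × E3 => ‖covKer κ D q p.1 p.2‖ ^ 2) :=
    (continuous_pow 2).comp_stronglyMeasurable hcovSM.norm
  have huSM : AEStronglyMeasurable u μ := by
    have h := husq.integral_prod_right' (ν := μ)
    exact h.aestronglyMeasurable
  set Ku : ℝ := (μ Set.univ).toReal * K ^ 2 with hKudef
  have hKu0 : 0 ≤ Ku := by positivity
  have hubd : ∀ x, Rt ≤ ‖x‖ → u x ≤ Ku := by
    intro x hx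
    rw [hudef]
    beta_reduce
    calc (∫ y, ‖covKer κ D q x y‖ ^ 2 ∂μ) ≤ ∫ _, K ^ 2 ∂μ := by
          refine integral_mono_of_nonneg
            (Filter.Eventually.of_forall fun y => by positivity) (integrable_const _) ?_
          filter_upwards [hae] with y hy
          exact pow_le_pow_left₀ (norm_nonneg _) (hcovbd x y hx hy) 2
      _ = Ku := by rw [integral_const, smul_eq_mul, measureReal_def]
  have huI : Integrable u μ := by
    refine Integrable.mono' (integrable_const Ku) huSM ?_
    filter_upwards [hae] with x hx
    rw [Real.norm_eq_abs, _root_.abs_of_nonneg (hu0 x)]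
    exact hubd x hx
  have hψpt : ∀ᵐ x ∂μ, ‖ψ x‖ ≤ u x ^ ((1:ℝ)/2) * Bsq ^ ((1:ℝ)/2) := by
    filter_upwards [hae] with x hx
    have hcovxm : AEStronglyMeasurable (fun y => covKer κ D q x y) μ :=
      (hcovSM.comp_measurable measurable_prodMk_left).aestronglyMeasurable
    have hcovbdx : ∀ᵐ y ∂μ, ‖covKer κ D q x y‖ ≤ K := by
      filter_upwards [hae] with y hy; exact hcovbd x y hx hy
    have hmem1 : MemLp (fun y => ‖covKer κ D q x y‖) (ENNReal.ofReal 2) μ := by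
      rw [hof2]
      exact MemLp.of_bound hcovxm.norm K
        (by filter_upwards [hcovbdx] with y hy; rwa [norm_norm])
    have hmem2 : MemLp (fun y => ‖φb y‖) (ENNReal.ofReal 2) μ := by
      rw [hof2]; exact hφb.norm
    have hstep1 : ‖ψ x‖ ≤ ∫ y, ‖covKer κ D q x y‖ * ‖φb y‖ ∂μ := by
      rw [hψdef]
      beta_reduce
      refine norm_integral_le_of_norm_le ?_
        (Filter.Eventually.of_forall fun y => (norm_mul _ _).le)
      refine Integrable.mono' (hφbI.norm.const_mul K)
        (hcovxm.norm.mul hφb.aestronglyMeasurable.norm) ?_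
      filter_upwards [hcovbdx] with y hy
      rw [Real.norm_eq_abs, _root_.abs_of_nonneg (by positivity)]
      exact mul_le_mul_of_nonneg_right hy (norm_nonneg _)
    have hstep2 := integral_mul_le_Lp_mul_Lq_of_nonneg hpq22
      (Filter.Eventually.of_forall fun y => norm_nonneg _)
      (Filter.Eventually.of_forall fun y => norm_nonneg _) hmem1 hmem2
    have hc1 : (∫ y, ‖covKer κ D q x y‖ ^ (2:ℝ) ∂μ) = u x := by
      rw [hudef]
      beta_reduce
      refine integral_congr_ae (Filter.Eventually.of_forall fun y => ?_)
      beta_reduce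
      rw [show (2:ℝ) = ((2:ℕ):ℝ) by norm_num, Real.rpow_natCast]
    have hc2 : (∫ y, ‖φb y‖ ^ (2:ℝ) ∂μ) = Bsq := by
      rw [hBsqdef]
      refine integral_congr_ae (Filter.Eventually.of_forall fun y => ?_)
      beta_reduce
      rw [show (2:ℝ) = ((2:ℕ):ℝ) by norm_num, Real.rpow_natCast]
    calc ‖ψ x‖ ≤ ∫ y, ‖covKer κ D q x y‖ * ‖φb y‖ ∂μ := hstep1
      _ ≤ (∫ y, ‖covKer κ D q x y‖ ^ (2:ℝ) ∂μ) ^ ((1:ℝ)/2)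
          * (∫ y, ‖φb y‖ ^ (2:ℝ) ∂μ) ^ ((1:ℝ)/2) := hstep2
      _ = u x ^ ((1:ℝ)/2) * Bsq ^ ((1:ℝ)/2) := by rw [hc1, hc2]
  have hψsq : ∀ᵐ x ∂μ, ‖ψ x‖ ^ 2 ≤ u x * Bsq := by
    filter_upwards [hψpt] with x hx
    have h1 : (u x ^ ((1:ℝ)/2)) ^ 2 = u x := by
      rw [← Real.rpow_natCast (u x ^ ((1:ℝ)/2)) 2, ← Real.rpow_mul (hu0 x)]
      norm_num
    have h2 : (Bsq ^ ((1:ℝ)/2)) ^ 2 = Bsq := by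
      rw [← Real.rpow_natCast (Bsq ^ ((1:ℝ)/2)) 2, ← Real.rpow_mul hBsq0]
      norm_num
    calc ‖ψ x‖ ^ 2 ≤ (u x ^ ((1:ℝ)/2) * Bsq ^ ((1:ℝ)/2)) ^ 2 :=
          pow_le_pow_left₀ (norm_nonneg _) hx 2
      _ = u x * Bsq := by rw [mul_pow, h1, h2]
  have hψSM : AEStronglyMeasurable ψ μ := by
    have hpair : AEStronglyMeasurable
        (fun p : E3 × E3 => covKer κ D q p.1 p.2 * φb p.2) (μ.prod μ) :=
      hcovSM.aestronglyMeasurable.mul (hφb.aestronglyMeasurable.comp_snd)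
    have h := hpair.integral_prod_right'
    exact h
  have hψbdc : ∀ᵐ x ∂μ, ‖ψ x‖ ≤ Ku ^ ((1:ℝ)/2) * Bsq ^ ((1:ℝ)/2) := by
    filter_upwards [hψpt, hae] with x h1 h2
    exact h1.trans (mul_le_mul_of_nonneg_right
      (Real.rpow_le_rpow (hu0 x) (hubd x h2) (by norm_num)) (Real.rpow_nonneg hBsq0 _))
  have hψmem : MemLp (fun x => ‖ψ x‖) (ENNReal.ofReal 2) μ := by
    rw [hof2]
    refine MemLp.of_bound hψSM.norm (Ku ^ ((1:ℝ)/2) * Bsq ^ ((1:ℝ)/2)) ?_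
    filter_upwards [hψbdc] with x hx
    rwa [norm_norm]
  have hInt2 : (∫ x, ‖ψ x‖ ^ (2:ℝ) ∂μ) ≤ (∫ x, u x ∂μ) * Bsq := by
    have hle : (∫ x, ‖ψ x‖ ^ (2:ℝ) ∂μ) ≤ ∫ x, u x * Bsq ∂μ := by
      refine integral_mono_of_nonneg
        (Filter.Eventually.of_forall fun x => Real.rpow_nonneg (norm_nonneg _) _)
        (huI.mul_const Bsq) ?_
      filter_upwards [hψsq] with x hx
      rw [show (2:ℝ) = ((2:ℕ):ℝ) by norm_num, Real.rpow_natCast]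
      exact hx
    rwa [integral_mul_const] at hle
  have hcovDist : covDist κ D μ q₁ q₂ = (∫ x, u x ∂μ) ^ ((1:ℝ)/2) := by
    rw [show covDist κ D μ q₁ q₂ = Real.sqrt
        (∫ x, ∫ y, ‖covKer κ D q₁ x y - covKer κ D q₂ x y‖ ^ 2 ∂μ ∂μ) from rfl,
      Real.sqrt_eq_rpow]
    congr 1
    refine integral_congr_ae ?_
    filter_upwards [hae] with x hx
    rw [hudef]
    beta_reduce
    refine integral_congr_ae ?_
    filter_upwards [hae] with y hy
    rw [hcovq x y hx hy]
  have hu12 : (∫ x, u x ∂μ) ^ ((1:ℝ)/2) * Bsq ^ ((1:ℝ)/2)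
      = ((∫ x, u x ∂μ) * Bsq) ^ ((1:ℝ)/2) :=
    (Real.mul_rpow (integral_nonneg hu0) hBsq0).symm
  have hfinal : ‖∫ x, (starRingEnd ℂ) (φa x) * ψ x ∂μ‖
      ≤ (eLpNorm φa 2 μ).toReal * ((eLpNorm φb 2 μ).toReal * covDist κ D μ q₁ q₂) := by
    have h1 : ‖∫ x, (starRingEnd ℂ) (φa x) * ψ x ∂μ‖ ≤ ∫ x, ‖φa x‖ * ‖ψ x‖ ∂μ := by
      refine norm_integral_le_of_norm_le ?_ (Filter.Eventually.of_forall fun x => ?_)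
      · refine Integrable.mono' (hφaI.norm.mul_const (Ku ^ ((1:ℝ)/2) * Bsq ^ ((1:ℝ)/2)))
          (hφa.aestronglyMeasurable.norm.mul hψSM.norm) ?_
        filter_upwards [hψbdc] with x hx
        rw [Real.norm_eq_abs, _root_.abs_of_nonneg (by positivity)]
        exact mul_le_mul_of_nonneg_left hx (norm_nonneg _)
      · rw [norm_mul, RCLike.norm_conj]
    have hmema : MemLp (fun x => ‖φa x‖) (ENNReal.ofReal 2) μ := by
      rw [hof2]; exact hφa.norm
    have h2 := integral_mul_le_Lp_mul_Lq_of_nonneg hpq22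
      (Filter.Eventually.of_forall fun x => norm_nonneg _)
      (Filter.Eventually.of_forall fun x => norm_nonneg _) hmema hψmem
    have ha : (∫ x, ‖φa x‖ ^ (2:ℝ) ∂μ) ^ ((1:ℝ)/2) = (eLpNorm φa 2 μ).toReal := by
      rw [hLp φa hφa]
      congr 1
      refine integral_congr_ae (Filter.Eventually.of_forall fun x => ?_)
      beta_reduce
      rw [show (2:ℝ) = ((2:ℕ):ℝ) by norm_num, Real.rpow_natCast]
    have hb : Bsq ^ ((1:ℝ)/2) = (eLpNorm φb 2 μ).toReal := (hLp φb hφb).symm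
    have h3 : (∫ x, ‖ψ x‖ ^ (2:ℝ) ∂μ) ^ ((1:ℝ)/2)
        ≤ (∫ x, u x ∂μ) ^ ((1:ℝ)/2) * Bsq ^ ((1:ℝ)/2) := by
      rw [hu12]
      exact Real.rpow_le_rpow
        (integral_nonneg fun x => Real.rpow_nonneg (norm_nonneg _) _) hInt2 (by norm_num)
    calc ‖∫ x, (starRingEnd ℂ) (φa x) * ψ x ∂μ‖ ≤ ∫ x, ‖φa x‖ * ‖ψ x‖ ∂μ := h1
      _ ≤ (∫ x, ‖φa x‖ ^ (2:ℝ) ∂μ) ^ ((1:ℝ)/2) * (∫ x, ‖ψ x‖ ^ (2:ℝ) ∂μ) ^ ((1:ℝ)/2) := h2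
      _ ≤ (∫ x, ‖φa x‖ ^ (2:ℝ) ∂μ) ^ ((1:ℝ)/2)
          * ((∫ x, u x ∂μ) ^ ((1:ℝ)/2) * Bsq ^ ((1:ℝ)/2)) := by
          refine mul_le_mul_of_nonneg_left h3 (Real.rpow_nonneg ?_ _)
          exact integral_nonneg fun x => Real.rpow_nonneg (norm_nonneg _) _
      _ = (eLpNorm φa 2 μ).toReal * ((eLpNorm φb 2 μ).toReal * covDist κ D μ q₁ q₂) := by
          rw [ha, hb, hcovDist]
          ring
  calc (2 * Real.pi) ^ ((3:ℝ)/2) * ‖ft q₁ γ - ft q₂ γ‖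
      = ‖∫ z in D, (q z : ℂ) * e2 z‖ := hft
    _ = ‖∫ x, (starRingEnd ℂ) (φa x) * ψ x ∂μ‖ := by rw [hTid]
    _ ≤ (eLpNorm φa 2 μ).toReal * ((eLpNorm φb 2 μ).toReal * covDist κ D μ q₁ q₂) := hfinal
    _ = (eLpNorm φa 2 μ).toReal * (eLpNorm φb 2 μ).toReal * covDist κ D μ q₁ q₂ := by ring
end
end

section
/- (Step 3 of the proof of Proposition 3.1: logarithmic bound on the infimum defining the index function.) Let 0 ≤ m < s, τ := max(2m + 3/2 − s, 0), and let A, R, C_s > 0 and κ ≥ 0. For δ > 0 define Φ(δ) := inf { A(1+t²+κ²) e^{2Rt} δ ρ^τ + (16/3) C_s² ρ^{2(m−s)} : ρ > 0, t > 0, ρ ≤ 2√(κ²+t²) }. Then there exists a constant C > 0 depending only on m, s, C_s, A, R and κ such that Φ(δ) ≤ C (log(3+δ^{−2}))^{−2(s−m)} for all δ ∈ (0,1]. -/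
set_option maxHeartbeats 1000000

noncomputable section

lemma aux_rpow_le_exp (a ε : ℝ) (ha : 0 ≤ a) (hε : 0 < ε) :
    ∃ K : ℝ, 0 < K ∧ ∀ x : ℝ, 1 ≤ x → x ^ a ≤ K * Real.exp (ε * x) := by
  refine ⟨Real.exp (a * (Real.log (a / ε) - 1)), Real.exp_pos _, fun x hx => ?_⟩
  have hx0 : 0 < x := lt_of_lt_of_le one_pos hx
  rw [Real.rpow_def_of_pos hx0, ← Real.exp_add]
  apply Real.exp_le_exp.mpr
  rcases eq_or_lt_of_le ha with h0 | ha'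
  · simp [← h0]
    positivity
  · have key : Real.log x ≤ ε * x / a + (Real.log (a / ε) - 1) := by
      have h1 : Real.log (ε * x / a) ≤ ε * x / a - 1 :=
        Real.log_le_sub_one_of_pos (by positivity)
      have h2 : Real.log (ε * x / a) = Real.log x - Real.log (a / ε) := by
        rw [show ε * x / a = x / (a / ε) by field_simp,
          Real.log_div hx0.ne' (by positivity)]
      linarith
    have := mul_le_mul_of_nonneg_right key ha'.le
    have h3 : ε * x / a * a = ε * x := by field_simp
    nlinarith

lemma aux_div_rpow (L R p : ℝ) (hL : 0 < L) (hR : 0 < R) :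
    (L / (8 * R)) ^ (-p) = (8 * R) ^ p * L ^ (-p) := by
  rw [Real.div_rpow hL.le (by linarith : (0:ℝ) ≤ 8 * R),
    Real.rpow_neg hL.le, Real.rpow_neg (by linarith : (0:ℝ) ≤ 8 * R),
    div_inv_eq_mul]
  ring

theorem log_bound_on_index_infimum
    (m s : ℝ) (hm : 0 ≤ m) (hms : m < s)
    (τ : ℝ) (hτ : τ = max (2 * m + 3 / 2 - s) 0)
    (A R Cs : ℝ) (hA : 0 < A) (hR : 0 < R) (hCs : 0 < Cs) (κ : ℝ) (hκ : 0 ≤ κ)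
    (Φ : ℝ → ℝ)
    (hΦ : ∀ δ : ℝ, Φ δ = sInf {v : ℝ | ∃ ρ t : ℝ, 0 < ρ ∧ 0 < t ∧
      ρ ≤ 2 * Real.sqrt (κ ^ 2 + t ^ 2) ∧
      v = A * (1 + t ^ 2 + κ ^ 2) * Real.exp (2 * R * t) * δ * ρ ^ τ +
        (16 / 3) * Cs ^ 2 * ρ ^ (2 * (m - s))}) :
    ∃ C : ℝ, 0 < C ∧ ∀ δ : ℝ, 0 < δ → δ ≤ 1 →
      Φ δ ≤ C * (Real.log (3 + 1 / δ ^ 2)) ^ (-(2 * (s - m))) := by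
  have hτ0 : 0 ≤ τ := hτ ▸ le_max_right _ _
  set p : ℝ := 2 * (s - m) with hp
  have hp0 : 0 < p := by simp [hp]; linarith
  obtain ⟨K, hK, hKle⟩ := aux_rpow_le_exp (τ + 2 + p) (1/4) (by linarith) (by norm_num)
  set K1 : ℝ := A * (1 + κ ^ 2 + 1 / (64 * R ^ 2)) * (8 * R) ^ (-τ) with hK1
  have hK1pos : 0 < K1 := by
    apply mul_pos (mul_pos hA (by positivity))
    exact Real.rpow_pos_of_pos (by linarith) _
  refine ⟨2 * K1 * K + 16 / 3 * Cs ^ 2 * (8 * R) ^ p, by positivity, fun δ hδ hδ1 => ?_⟩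
  set L : ℝ := Real.log (3 + 1 / δ ^ 2) with hL
  have hbase : (1:ℝ) < 3 + 1 / δ ^ 2 := by
    have : 0 < 1 / δ ^ 2 := by positivity
    linarith
  have hL1 : 1 ≤ L := by
    rw [hL, Real.le_log_iff_exp_le (by linarith)]
    have h4 : (1:ℝ) ≤ 1 / δ ^ 2 := by
      rw [le_div_iff₀ (by positivity)]
      nlinarith
    have := Real.exp_one_lt_d9
    linarith
  have hLpos : 0 < L := by linarith
  set t : ℝ := L / (8 * R) with ht
  have htpos : 0 < t := by positivity
  -- δ * exp (L/4) ≤ 2 * exp (-(L/4))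
  have hexpL : Real.exp L = 3 + 1 / δ ^ 2 := Real.exp_log (by linarith)
  have hδe : δ * Real.exp (L / 4) ≤ 2 * Real.exp (-(L / 4)) := by
    have hsq : (δ * Real.exp (L / 2)) ^ 2 ≤ 2 ^ 2 := by
      have : Real.exp (L / 2) ^ 2 = Real.exp L := by
        rw [← Real.exp_nat_mul]; ring_nf
      calc (δ * Real.exp (L / 2)) ^ 2 = δ ^ 2 * Real.exp (L / 2) ^ 2 := by ring
        _ = δ ^ 2 * (3 + 1 / δ ^ 2) := by rw [this, hexpL]
        _ = 3 * δ ^ 2 + 1 := by field_simp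
        _ ≤ 2 ^ 2 := by nlinarith
    have h1 : δ * Real.exp (L / 2) ≤ 2 := by
      nlinarith [Real.exp_pos (L / 2), mul_pos hδ (Real.exp_pos (L / 2))]
    have h4 : Real.exp (L / 2) * Real.exp (-(L / 4)) = Real.exp (L / 4) := by
      rw [← Real.exp_add]; congr 1; ring
    calc δ * Real.exp (L / 4)
        = δ * Real.exp (L / 2) * Real.exp (-(L / 4)) := by
          rw [mul_assoc, h4]
      _ ≤ 2 * Real.exp (-(L / 4)) :=
          mul_le_mul_of_nonneg_right h1 (Real.exp_pos _).le
  -- the chosen value is in the set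
  set V : ℝ := A * (1 + t ^ 2 + κ ^ 2) * Real.exp (2 * R * t) * δ * t ^ τ +
      (16 / 3) * Cs ^ 2 * t ^ (2 * (m - s)) with hV
  have hmem : V ∈ {v : ℝ | ∃ ρ t : ℝ, 0 < ρ ∧ 0 < t ∧
      ρ ≤ 2 * Real.sqrt (κ ^ 2 + t ^ 2) ∧
      v = A * (1 + t ^ 2 + κ ^ 2) * Real.exp (2 * R * t) * δ * ρ ^ τ +
        (16 / 3) * Cs ^ 2 * ρ ^ (2 * (m - s))} := by
    refine ⟨t, t, htpos, htpos, ?_, rfl⟩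
    have h1 : t ≤ Real.sqrt (κ ^ 2 + t ^ 2) := by
      nlinarith [Real.sq_sqrt (show (0:ℝ) ≤ κ ^ 2 + t ^ 2 by positivity),
        Real.sqrt_nonneg (κ ^ 2 + t ^ 2)]
    linarith [Real.sqrt_nonneg (κ ^ 2 + t ^ 2)]
  have hbdd : BddBelow {v : ℝ | ∃ ρ t : ℝ, 0 < ρ ∧ 0 < t ∧
      ρ ≤ 2 * Real.sqrt (κ ^ 2 + t ^ 2) ∧
      v = A * (1 + t ^ 2 + κ ^ 2) * Real.exp (2 * R * t) * δ * ρ ^ τ +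
        (16 / 3) * Cs ^ 2 * ρ ^ (2 * (m - s))} := by
    refine ⟨0, fun v hv => ?_⟩
    obtain ⟨ρ, t', hρ, ht', _, hveq⟩ := hv
    have h1 : (0:ℝ) ≤ ρ ^ τ := (Real.rpow_pos_of_pos hρ _).le
    have h2 : (0:ℝ) ≤ ρ ^ (2 * (m - s)) := (Real.rpow_pos_of_pos hρ _).le
    have h3 : 0 < Real.exp (2 * R * t') := Real.exp_pos _
    rw [hveq]
    have : 0 < 1 + t' ^ 2 + κ ^ 2 := by positivity
    positivity
  have hΦle : Φ δ ≤ V := by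
    rw [hΦ δ]
    exact csInf_le hbdd hmem
  -- now bound V
  have h2Rt : 2 * R * t = L / 4 := by rw [ht]; field_simp; ring
  have hLp : (0:ℝ) < L ^ p := Real.rpow_pos_of_pos hLpos _
  have hLnegp : L ^ (-p) = (L ^ p)⁻¹ := Real.rpow_neg hLpos.le p
  -- second term
  have hterm2 : (16 / 3) * Cs ^ 2 * t ^ (2 * (m - s)) =
      16 / 3 * Cs ^ 2 * (8 * R) ^ p * L ^ (-p) := by
    have h1 : (2 : ℝ) * (m - s) = -p := by rw [hp]; ring
    rw [h1, ht, aux_div_rpow L R p hLpos hR]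
    ring
  -- first term bound
  have htτ : t ^ τ = (8 * R) ^ (-τ) * L ^ τ := by
    have := aux_div_rpow L R (-τ) hLpos hR
    rw [neg_neg] at this
    rw [ht, this]
  have hpoly : A * (1 + t ^ 2 + κ ^ 2) * t ^ τ ≤ K1 * L ^ (τ + 2) := by
    have hL2 : (1:ℝ) ≤ L ^ 2 := by nlinarith
    have ht2 : t ^ 2 = 1 / (64 * R ^ 2) * L ^ 2 := by
      rw [ht, div_pow, show (8 * R) ^ 2 = 64 * R ^ 2 by ring]
      ring
    have h1 : 1 + t ^ 2 + κ ^ 2 ≤ (1 + κ ^ 2 + 1 / (64 * R ^ 2)) * L ^ 2 := by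
      rw [ht2]
      have hc : (0:ℝ) < 1 / (64 * R ^ 2) := by positivity
      nlinarith
    have hrw : L ^ (τ + 2) = L ^ τ * L ^ 2 := by
      rw [Real.rpow_add hLpos, Real.rpow_two]
    rw [htτ, hK1, hrw]
    have hLτ : (0:ℝ) < L ^ τ := Real.rpow_pos_of_pos hLpos _
    have h8R : (0:ℝ) < (8 * R) ^ (-τ) := Real.rpow_pos_of_pos (by linarith) _
    calc A * (1 + t ^ 2 + κ ^ 2) * ((8 * R) ^ (-τ) * L ^ τ)
        ≤ A * ((1 + κ ^ 2 + 1 / (64 * R ^ 2)) * L ^ 2) * ((8 * R) ^ (-τ) * L ^ τ) := by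
          apply mul_le_mul_of_nonneg_right _ (by positivity)
          exact mul_le_mul_of_nonneg_left h1 hA.le
      _ = A * (1 + κ ^ 2 + 1 / (64 * R ^ 2)) * (8 * R) ^ (-τ) * (L ^ τ * L ^ 2) := by ring
  have hKey : K1 * L ^ (τ + 2) * (2 * Real.exp (-(L / 4))) ≤ 2 * K1 * K * L ^ (-p) := by
    have h1 := hKle L hL1
    have h2 : L ^ (τ + 2 + p) = L ^ (τ + 2) * L ^ p := Real.rpow_add hLpos _ _
    have h3 : Real.exp ((1:ℝ)/4 * L) = Real.exp (L / 4) := by ring_nf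
    rw [h2, h3] at h1
    -- L^(τ+2) * L^p ≤ K * exp (L/4)
    have hepos : 0 < Real.exp (L / 4) := Real.exp_pos _
    have hene : Real.exp (-(L / 4)) = (Real.exp (L / 4))⁻¹ := by
      rw [← Real.exp_neg]
    rw [hene, hLnegp,
      show K1 * L ^ (τ + 2) * (2 * (Real.exp (L / 4))⁻¹) =
        2 * K1 * L ^ (τ + 2) / Real.exp (L / 4) by field_simp,
      show 2 * K1 * K * (L ^ p)⁻¹ = 2 * K1 * K / L ^ p by rw [div_eq_mul_inv],
      div_le_div_iff₀ hepos hLp]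
    nlinarith [mul_le_mul_of_nonneg_left h1 (by positivity : (0:ℝ) ≤ 2 * K1)]
  -- combine
  have hterm1 : A * (1 + t ^ 2 + κ ^ 2) * Real.exp (2 * R * t) * δ * t ^ τ ≤
      2 * K1 * K * L ^ (-p) := by
    have e1 : A * (1 + t ^ 2 + κ ^ 2) * Real.exp (2 * R * t) * δ * t ^ τ =
        A * (1 + t ^ 2 + κ ^ 2) * t ^ τ * (δ * Real.exp (L / 4)) := by
      rw [h2Rt]; ring
    rw [e1]
    calc A * (1 + t ^ 2 + κ ^ 2) * t ^ τ * (δ * Real.exp (L / 4))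
        ≤ K1 * L ^ (τ + 2) * (2 * Real.exp (-(L / 4))) := by
          apply mul_le_mul hpoly hδe (by positivity)
          positivity
      _ ≤ 2 * K1 * K * L ^ (-p) := hKey
  have hfinal : V ≤ (2 * K1 * K + 16 / 3 * Cs ^ 2 * (8 * R) ^ p) * L ^ (-p) := by
    rw [hV, hterm2]
    have := hterm1
    nlinarith [Real.rpow_pos_of_pos hLpos (-p)]
  calc Φ δ ≤ V := hΦle
    _ ≤ (2 * K1 * K + 16 / 3 * Cs ^ 2 * (8 * R) ^ p) * L ^ (-p) := hfinal
    _ = (2 * K1 * K + 16 / 3 * Cs ^ 2 * (8 * R) ^ p) * L ^ (-(2 * (s - m))) := by rw [hp]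
end
end
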